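/- arXiv:1811.01083 — 3 statements merged into one kernel-verified Lean document; each statement's English description precedes it below -/
import Mathlib

section
/- δ^(k)(x) * H(x) = δ^(k)(x) for every k ∈ ℕ₀, where * is the Hörmander-type product on the algebra 𝒜 defined by F*G = lim_{ε↓0} F(x)·G(x+ε). -/
open MeasureTheory Filter Topology Set

noncomputable section

/-- Distributions, modelled as functionals; distributional identities are
tested against smooth compactly supported test functions via `dEq`. -/
abbrev SDist : Type := (ℝ → ℂ) → ℂ

/-- Test functions: smooth and compactly supported. -/
def IsTest (t : ℝ → ℂ) : Prop := ContDiff ℝ (⊤ : ℕ∞) t ∧ HasCompactSupport t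

/-- The regular distribution associated to a function. -/
def ofFun (f : ℝ → ℂ) : SDist := fun t => ∫ x, f x * t x

/-- Distributional derivative. -/
def Dop (F : SDist) : SDist := fun t => - F (deriv t)

/-- Iterated distributional derivative. -/
def Dn (n : ℕ) (F : SDist) : SDist := Dop^[n] F

/-- `deltaD n x₀` is the n-th derivative of the Dirac delta at `x₀`. -/
def deltaD (n : ℕ) (x₀ : ℝ) : SDist := fun t => (-1 : ℂ) ^ n * iteratedDeriv n t x₀

/-- Equality of distributions (tested on test functions). -/
def dEq (F G : SDist) : Prop := ∀ t, IsTest t → F t = G t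

/-- Equality of (restrictions of) distributions on a set Ω. -/
def dEqOn (Ω : Set ℝ) (F G : SDist) : Prop :=
  ∀ t, IsTest t → tsupport t ⊆ Ω → F t = G t

/-- Dual product of a distribution by a smooth function. -/
def mulSmooth (f : ℝ → ℂ) (F : SDist) : SDist := fun t => F (fun x => f x * t x)

/-- `shift ε F` is the distribution `F(· + ε)`. -/
def shift (ε : ℝ) (F : SDist) : SDist := fun t => F (fun x => t (x - ε))

/-- The Hörmander product of distributions with disjoint singular supports:
`P` is the product of `F` and `G` iff near every point one of the factors is
(given by) a smooth function and `P` is locally the corresponding dual product. -/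
def IsHProd (F G P : SDist) : Prop :=
  ∀ x : ℝ, ∃ Ω : Set ℝ, IsOpen Ω ∧ x ∈ Ω ∧
    ((∃ f, ContDiff ℝ (⊤ : ℕ∞) f ∧ dEqOn Ω F (ofFun f) ∧ dEqOn Ω P (mulSmooth f G)) ∨
     (∃ g, ContDiff ℝ (⊤ : ℕ∞) g ∧ dEqOn Ω G (ofFun g) ∧ dEqOn Ω P (mulSmooth g F)))

/-- The product `*` of the paper: `P = F * G` iff
`P = lim_{ε↓0} F(x)·G(x+ε)` in the distributional sense, where `·` is the
Hörmander product. -/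
def IsStar (F G P : SDist) : Prop :=
  ∃ Q : ℝ → SDist,
    (∀ᶠ ε in 𝓝[>] (0 : ℝ), IsHProd F (shift ε G) (Q ε)) ∧
    ∀ t, IsTest t → Tendsto (fun ε => Q ε t) (𝓝[>] (0 : ℝ)) (𝓝 (P t))

/-- Piecewise smooth functions: smooth off a finite set, with finite lateral
limits of all derivatives at the exceptional points. -/
def PiecewiseSmooth (f : ℝ → ℂ) : Prop :=
  ∃ I : Finset ℝ, ContDiffOn ℝ (⊤ : ℕ∞) f ((I : Set ℝ)ᶜ) ∧
    ∀ x₀ ∈ I, ∀ j : ℕ,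
      (∃ l, Tendsto (iteratedDeriv j f) (𝓝[<] x₀) (𝓝 l)) ∧
      (∃ l, Tendsto (iteratedDeriv j f) (𝓝[>] x₀) (𝓝 l))

/-- The space 𝒜: piecewise smooth functions together with all their
distributional derivatives. -/
def memA (F : SDist) : Prop :=
  ∃ (f : ℝ → ℂ) (k : ℕ), PiecewiseSmooth f ∧ dEq F (Dn k (ofFun f))

/-- Heaviside step function. -/
def Heav : ℝ → ℂ := fun x => if 0 < x then 1 else 0

/-- `H₋ = 1 - H`. -/
def HeavM : ℝ → ℂ := fun x => 1 - Heav x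

/-- The open cell `Ω_i = (x_i, x_{i+1})` (with `x_0 = -∞`, `x_{m+1} = +∞`)
determined by the points `x 0 < … < x (m-1)`. -/
def cell (m : ℕ) (x : Fin m → ℝ) (i : Fin (m + 1)) : Set ℝ :=
  {y | (∀ j : Fin m, (j : ℕ) < (i : ℕ) → x j < y) ∧
       ∀ j : Fin m, (i : ℕ) ≤ (j : ℕ) → y < x j}

/-- The distribution `Σᵢ fᵢ χ_{Ωᵢ} + Σᵢⱼ cᵢⱼ δ^{(j)}(x - xᵢ)`. -/
def repDist (m n : ℕ) (x : Fin m → ℝ) (f : Fin (m + 1) → ℝ → ℂ)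
    (c : Fin m → Fin (n + 1) → ℂ) : SDist :=
  fun t => (∑ i : Fin (m + 1), ofFun ((cell m x i).indicator (f i)) t)
    + ∑ i : Fin m, ∑ j : Fin (n + 1), c i j * deltaD (j : ℕ) (x i) t

/-- `G = D̃_I F`, the modified derivative `D̃_I F = DF + Σ_{x₀∈I} (F*δ_{x₀} − δ_{x₀}*F)`. -/
def IsDtilde (I : Finset ℝ) (F G : SDist) : Prop :=
  ∃ P Q : ℝ → SDist,
    (∀ x₀ ∈ I, IsStar F (deltaD 0 x₀) (P x₀) ∧ IsStar (deltaD 0 x₀) F (Q x₀)) ∧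
    dEq G (fun t => Dop F t + ∑ x₀ ∈ I, (P x₀ t - Q x₀ t))

/-- `G = D̃_I^k F`, the k-th iterate of the modified derivative. -/
def IsDtildeN (I : Finset ℝ) : ℕ → SDist → SDist → Prop
  | 0, F, G => dEq F G
  | k + 1, F, G => ∃ M, IsDtildeN I k F M ∧ IsDtilde I M G

/-- `G = Γ̂^{(j)} F = F*δ^{(j)} − δ^{(j)}*F`. -/
def IsGammaN (j : ℕ) (F G : SDist) : Prop :=
  ∃ P Q, IsStar F (deltaD j 0) P ∧ IsStar (deltaD j 0) F Q ∧
    dEq G (fun t => P t - Q t)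

/-- `Fh = F̂ ψ`, the interface operator
`F̂ψ = Σ_{i<m,j<n} (A_{ij} D^i δ̂₋ D^j − B_{ij} D^i δ̂₊ D^j) ψ`,
where `δ̂₋ G = G*δ` and `δ̂₊ G = δ*G`. -/
def IsFhat (m n : ℕ) (A B : Fin m → Fin n → ℂ) (ψ Fh : SDist) : Prop :=
  ∃ P Q : Fin n → SDist,
    (∀ j : Fin n, IsStar (Dn (j : ℕ) ψ) (deltaD 0 0) (P j) ∧
      IsStar (deltaD 0 0) (Dn (j : ℕ) ψ) (Q j)) ∧
    dEq Fh (fun t => ∑ i : Fin m, ∑ j : Fin n,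
      (A i j * Dn (i : ℕ) (P j) t - B i j * Dn (i : ℕ) (Q j) t))

/-- `g` is the family of L² representatives of the distributional derivatives of
`ψ` up to order `n`; this expresses `ψ ∈ W₂ⁿ(ℝ)`. -/
def SobRep (n : ℕ) (ψ : ℝ → ℂ) (g : ℕ → ℝ → ℂ) : Prop :=
  g 0 = ψ ∧ ∀ i ≤ n, MemLp (g i) 2 volume ∧ dEq (Dn i (ofFun ψ)) (ofFun (g i))

/-!
For every `ε > 0` the shifted Heaviside function `H(x + ε)` is the constant `1` on
`(-ε, ∞)`, a neighbourhood of the only point of the support of `δ^(k)`, while `δ^(k)`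
vanishes on `ℝ \ {0}`. So the Hörmander product `δ^(k) · H(· + ε)` is `δ^(k)` itself for
each `ε > 0`, and the limit `ε ↓ 0` is trivial.
-/

theorem iteratedDeriv_eq_zero_of_notMem_tsupport {𝕜 E : Type*} [NontriviallyNormedField 𝕜]
    [NormedAddCommGroup E] [NormedSpace 𝕜 E] {t : 𝕜 → E} {x : 𝕜} (hx : x ∉ tsupport t)
    (n : ℕ) : iteratedDeriv n t x = 0 := by
  rw [iteratedDeriv_eq_iteratedFDeriv,
    image_eq_zero_of_notMem_tsupport fun h => hx (tsupport_iteratedFDeriv_subset n h)]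
  rfl

theorem dEqOn_compl_singleton_deltaD (n : ℕ) (x₀ : ℝ) :
    dEqOn {x₀}ᶜ (deltaD n x₀) (ofFun 0) := by
  intro t _ hsupp
  have hx₀ : x₀ ∉ tsupport t := fun h => hsupp h rfl
  simp [deltaD, ofFun, iteratedDeriv_eq_zero_of_notMem_tsupport hx₀]

theorem dEqOn_ofFun_of_eqOn {Ω : Set ℝ} {f g : ℝ → ℂ} (hfg : EqOn f g Ω) :
    dEqOn Ω (ofFun f) (ofFun g) := by
  intro t _ hsupp
  refine integral_congr_ae (.of_forall fun x => ?_)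
  by_cases hx : x ∈ tsupport t
  · simp only [hfg (hsupp hx)]
  · simp [image_eq_zero_of_notMem_tsupport hx]

theorem shift_ofFun (ε : ℝ) (f : ℝ → ℂ) :
    shift ε (ofFun f) = ofFun (fun x => f (x + ε)) := by
  funext t
  simpa [shift, ofFun] using (integral_add_right_eq_self (fun x => f x * t (x - ε)) ε).symm

theorem isHProd_ofFun_self {F : SDist} {g : ℝ → ℂ}
    (hcover : ∀ x : ℝ, ∃ Ω : Set ℝ, IsOpen Ω ∧ x ∈ Ω ∧ (dEqOn Ω F (ofFun 0) ∨ EqOn g 1 Ω)) :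
    IsHProd F (ofFun g) F := by
  intro x
  obtain ⟨Ω, hΩ, hxΩ, hF | hg⟩ := hcover x
  · refine ⟨Ω, hΩ, hxΩ, Or.inl ⟨0, contDiff_const, hF, fun t ht hsupp => ?_⟩⟩
    rw [hF t ht hsupp]
    simp [ofFun, mulSmooth]
  · refine ⟨Ω, hΩ, hxΩ, Or.inr ⟨1, contDiff_const, dEqOn_ofFun_of_eqOn hg, fun t _ _ => ?_⟩⟩
    simp [mulSmooth]

theorem IsStar.of_eventually_isHProd {F G P : SDist}
    (h : ∀ᶠ ε in 𝓝[>] (0 : ℝ), IsHProd F (shift ε G) P) : IsStar F G P :=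
  ⟨fun _ => P, h, fun _ _ => tendsto_const_nhds⟩

theorem heav_add_eqOn_one (ε : ℝ) : EqOn (fun x => Heav (x + ε)) 1 (Ioi (-ε)) := by
  intro x hx
  have hpos : 0 < x + ε := by linarith [mem_Ioi.mp hx]
  simp [Heav, hpos]

/-- δ^(k)(x) * H(x) = δ^(k)(x) for every k ∈ ℕ₀. -/
theorem delta_star_heaviside (k : ℕ) :
    IsStar (deltaD k 0) (ofFun Heav) (deltaD k 0) := by
  refine IsStar.of_eventually_isHProd ?_
  filter_upwards [self_mem_nhdsWithin] with ε (hε : 0 < ε)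
  rw [shift_ofFun]
  refine isHProd_ofFun_self fun x => ?_
  rcases eq_or_ne x 0 with rfl | hx
  · exact ⟨Ioi (-ε), isOpen_Ioi, neg_lt_zero.mpr hε, Or.inr (heav_add_eqOn_one ε)⟩
  · exact ⟨{0}ᶜ, isOpen_compl_singleton, hx, Or.inl (dEqOn_compl_singleton_deltaD k 0)⟩
end
end

section
/- H(x) * δ^(k)(x) = 0 for every k ∈ ℕ₀. -/
open MeasureTheory Filter Topology Set

noncomputable section

/-!
For every `ε > 0` the Hörmander product `H · δ^{(k)}(x + ε)` already vanishes: `H` is zero on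
`(-∞, 0)` and the shifted delta, which sits at `-ε`, is zero away from `-ε`, and these two open
sets cover `ℝ`. So the products are identically zero and so is their limit as `ε ↓ 0`.
-/

lemma ofFun_apply_zero (f : ℝ → ℂ) : ofFun f 0 = 0 := by
  simp [ofFun]

lemma ofFun_zero_apply (t : ℝ → ℂ) : ofFun 0 t = 0 := by
  simp [ofFun]

lemma deltaD_apply_zero (k : ℕ) (x₀ : ℝ) : deltaD k x₀ 0 = 0 := by
  simp [deltaD]

lemma shift_deltaD (ε : ℝ) (k : ℕ) (x₀ : ℝ) : shift ε (deltaD k x₀) = deltaD k (x₀ - ε) := by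
  funext t
  simp only [shift, deltaD, iteratedDeriv_comp_sub_const]

lemma dEqOn_ofFun_zero_of_eqOn {Ω : Set ℝ} {f : ℝ → ℂ} (hf : EqOn f 0 Ω) :
    dEqOn Ω (ofFun f) (ofFun 0) := by
  intro t _ hsupp
  have hvanish : ∀ x, f x * t x = 0 := by
    intro x
    by_cases hx : x ∈ Ω
    · simp [hf hx]
    · simp [image_eq_zero_of_notMem_tsupport fun h => hx (hsupp h)]
  simp [ofFun, hvanish]

lemma dEqOn_deltaD_compl_singleton (k : ℕ) (x₀ : ℝ) :
    dEqOn {x₀}ᶜ (deltaD k x₀) (ofFun 0) := by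
  intro t _ hsupp
  have hx₀ : x₀ ∉ tsupport t := fun h => hsupp h rfl
  have hlocal : t =ᶠ[𝓝 x₀] 0 := notMem_tsupport_iff_eventuallyEq.mp hx₀
  simp [deltaD, ofFun_zero_apply, hlocal.iteratedDeriv_eq]

lemma isHProd_zero {F G : SDist} (hF : F 0 = 0) (hG : G 0 = 0)
    (hcover : ∀ x, ∃ Ω, IsOpen Ω ∧ x ∈ Ω ∧
      (dEqOn Ω F (ofFun 0) ∨ dEqOn Ω G (ofFun 0))) :
    IsHProd F G 0 := by
  intro x
  obtain ⟨Ω, hΩ, hx, hF0 | hG0⟩ := hcover x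
  · refine ⟨Ω, hΩ, hx, Or.inl ⟨0, contDiff_const, hF0, fun t _ _ => ?_⟩⟩
    simp only [mulSmooth, Pi.zero_apply, zero_mul]
    exact hG.symm
  · refine ⟨Ω, hΩ, hx, Or.inr ⟨0, contDiff_const, hG0, fun t _ _ => ?_⟩⟩
    simp only [mulSmooth, Pi.zero_apply, zero_mul]
    exact hF.symm

lemma eqOn_heav_Iio : EqOn Heav 0 (Iio 0) := fun x hx => by
  simp [Heav, not_lt.mpr (le_of_lt (mem_Iio.mp hx))]

/-- H(x) * δ^(k)(x) = 0 for every k ∈ ℕ₀. -/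
theorem heaviside_star_delta (k : ℕ) :
    IsStar (ofFun Heav) (deltaD k 0) (0 : SDist) := by
  refine ⟨fun _ => 0, ?_, fun t _ => tendsto_const_nhds⟩
  filter_upwards [self_mem_nhdsWithin] with ε (hε : 0 < ε)
  rw [shift_deltaD, zero_sub]
  refine isHProd_zero (ofFun_apply_zero Heav) (deltaD_apply_zero k (-ε)) fun x => ?_
  rcases lt_or_ge x 0 with hx | hx
  · exact ⟨Iio 0, isOpen_Iio, hx, Or.inl (dEqOn_ofFun_zero_of_eqOn eqOn_heav_Iio)⟩
  · refine ⟨{-ε}ᶜ, isOpen_compl_singleton, ?_, Or.inr (dEqOn_deltaD_compl_singleton k (-ε))⟩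
    exact ne_of_gt (by linarith)
end
end

section
/- Explicit product formula: if F = Σ_i f_i χ_{Ω_i} + Σ_{i,j} F_{ij} δ^(j)(x−x_i) and G = Σ_i g_i χ_{Ω_i} + Σ_{i,j} G_{ij} δ^(j)(x−x_i) (with common singular support points x₁<…<x_m and intervals Ω_i = (x_i,x_{i+1})), then F*G = Σ_i f_i g_i χ_{Ω_i} + Σ_{i=1}^m Σ_{j=0}^n [F_{ij} g_i + G_{ij} f_{i−1}] δ^(j)(x−x_i); in particular F*G ∈ 𝒜. -/
open MeasureTheory Filter Topology Set

noncomputable section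

/-!
For small `ε > 0` the singular points `x k` of `F` and `x k - ε` of `G(· + ε)` interlace, so the
Hörmander product `F · G(· + ε)` exists and is explicit: off the points `x k` the factor `F` is
the smooth `f i`, and near `x k` the factor `G(· + ε)` is the smooth `g (k+1) (· + ε)`. Its
regular part `∫ F_reg(y) G_reg(y + ε) t(y) dy` converges by dominated convergence, since
`G_reg` is continuous off finitely many points, and its delta terms are continuous in `ε`;
the value at `ε = 0` is the claimed formula.
-/

section Cells

variable {m : ℕ} {x : Fin m → ℝ}

lemma isOpen_cell (m : ℕ) (x : Fin m → ℝ) (i : Fin (m + 1)) : IsOpen (cell m x i) := by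
  simp only [cell, ofPred_and, ofPred_forall]
  exact (isOpen_iInter_of_finite fun j => isOpen_iInter_of_finite fun _ =>
      isOpen_lt continuous_const continuous_id).inter
    (isOpen_iInter_of_finite fun j => isOpen_iInter_of_finite fun _ =>
      isOpen_lt continuous_id continuous_const)

lemma apply_notMem_cell (k : Fin m) (i : Fin (m + 1)) : x k ∉ cell m x i := fun h => by
  rcases lt_or_ge (k : ℕ) i with hk | hk
  exacts [lt_irrefl _ (h.1 k hk), lt_irrefl _ (h.2 k hk)]

lemma eq_of_mem_cell {i i' : Fin (m + 1)} {y : ℝ} (h : y ∈ cell m x i) (h' : y ∈ cell m x i') :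
    i = i' := by
  by_contra hne
  wlog hlt : i < i' generalizing i i'
  · exact this h' h (Ne.symm hne) (lt_of_le_of_ne (not_lt.1 hlt) (Ne.symm hne))
  have hi : (i : ℕ) < m := by omega
  exact lt_asymm (h.2 ⟨i, hi⟩ le_rfl) (h'.1 ⟨i, hi⟩ hlt)

/-- The cell containing `y` is the one indexed by the number of points `x j` below `y`. -/
lemma exists_mem_cell (hx : StrictMono x) {y : ℝ} (hy : y ∉ range x) :
    ∃ i : Fin (m + 1), y ∈ cell m x i := by
  classical
  set s := Finset.univ.filter fun j => x j < y
  have hne : ∀ j, x j ≠ y := fun j e => hy ⟨j, e⟩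
  have below_iff : ∀ j : Fin m, x j < y ↔ (j : ℕ) < s.card := by
    intro j
    constructor
    · intro hj
      have hsub : Finset.Iic j ⊆ s := fun k hk => by
        simpa [s] using (hx.monotone (Finset.mem_Iic.1 hk)).trans_lt hj
      simpa using Finset.card_le_card hsub
    · intro hj
      by_contra hyj
      have hyx : y < x j := lt_of_le_of_ne (not_lt.1 hyj) (hne j).symm
      have hsub : s ⊆ Finset.Iio j := fun k hk => by
        simpa [s] using hx.lt_iff_lt.1 ((Finset.mem_filter.1 hk).2.trans hyx)
      have := Finset.card_le_card hsub
      simp only [Fin.card_Iio] at this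
      omega
  have hs : s.card < m + 1 := Nat.lt_succ_of_le ((Finset.card_le_univ s).trans (by simp))
  refine ⟨⟨s.card, hs⟩, fun j hj => (below_iff j).2 hj, fun j hj => ?_⟩
  refine lt_of_le_of_ne (not_lt.1 fun h => ?_) (hne j).symm
  exact absurd ((below_iff j).1 h) (by simpa using hj)

lemma mem_cell_sub_iff (ε : ℝ) (i : Fin (m + 1)) (y : ℝ) :
    y ∈ cell m (fun j => x j - ε) i ↔ y + ε ∈ cell m x i := by
  simp only [cell, mem_ofPred_eq, sub_lt_iff_lt_add, lt_sub_iff_add_lt]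

/-- For small `ε > 0` the points `x k - ε` and `x k` interlace:
`x (k-1) < x k - ε < x k < x (k+1) - ε`. -/
lemma eventually_interlaced (hx : StrictMono x) :
    ∀ᶠ ε in 𝓝[>] (0 : ℝ), (∀ k, x k ∈ cell m (fun j => x j - ε) k.succ) ∧
      ∀ k, x k - ε ∈ cell m x k.castSucc := by
  have gap : ∀ᶠ ε in 𝓝[>] (0 : ℝ), 0 < ε ∧ ∀ j k : Fin m, j < k → ε < x k - x j := by
    refine eventually_mem_nhdsWithin.and (nhdsWithin_le_nhds (eventually_all.2 fun j =>
      eventually_all.2 fun k => ?_))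
    by_cases hjk : j < k
    · filter_upwards [eventually_lt_nhds (sub_pos.2 (hx hjk))] with ε hε _ using hε
    · exact Eventually.of_forall fun _ h => absurd h hjk
  filter_upwards [gap] with ε ⟨hε, hgap⟩
  refine ⟨fun k => (mem_cell_sub_iff ε _ _).2 ⟨fun j hj => ?_, fun j hj => ?_⟩,
    fun k => ⟨fun j hj => ?_, fun j hj => ?_⟩⟩
  · have : x j ≤ x k := hx.monotone (Fin.le_iff_val_le_val.2 (by rw [Fin.val_succ] at hj; omega))
    linarith
  · linarith [hgap k j (Fin.lt_def.2 (by rw [Fin.val_succ] at hj; omega))]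
  · linarith [hgap j k (Fin.lt_def.2 (by simpa using hj))]
  · have : x k ≤ x j := hx.monotone (Fin.le_iff_val_le_val.2 (by simpa using hj))
    linarith

end Cells

/-- The regular part `Σᵢ fᵢ χ_{Ωᵢ}` of `repDist` as a function; it vanishes at the points `x k`. -/
def cellwise (m : ℕ) (x : Fin m → ℝ) (f : Fin (m + 1) → ℝ → ℂ) (y : ℝ) : ℂ :=
  ∑ i, (cell m x i).indicator (f i) y

section Piecewise

variable {m : ℕ} {x : Fin m → ℝ} {f g : Fin (m + 1) → ℝ → ℂ}

lemma cellwise_of_mem {i : Fin (m + 1)} {y : ℝ} (h : y ∈ cell m x i) :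
    cellwise m x f y = f i y := by
  rw [cellwise, Finset.sum_eq_single i (fun k _ hk => indicator_of_notMem
    (fun hk' => hk (eq_of_mem_cell hk' h)) _) (by simp), indicator_of_mem h]

lemma cellwise_of_forall_notMem {y : ℝ} (h : ∀ i, y ∉ cell m x i) : cellwise m x f y = 0 :=
  Finset.sum_eq_zero fun i _ => indicator_of_notMem (h i) _

lemma cellwise_mul (y : ℝ) :
    cellwise m x (fun i z => f i z * g i z) y = cellwise m x f y * cellwise m x g y := by
  by_cases h : ∃ i, y ∈ cell m x i
  · obtain ⟨i, hi⟩ := h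
    simp only [cellwise_of_mem hi]
  · push Not at h
    simp only [cellwise_of_forall_notMem h, mul_zero]

lemma indicator_cell_sub {u : ℝ → ℂ} (ε y : ℝ) (i : Fin (m + 1)) :
    (cell m (fun j => x j - ε) i).indicator (fun z => u (z + ε)) y
      = (cell m x i).indicator u (y + ε) := by
  by_cases h : y + ε ∈ cell m x i
  · rw [indicator_of_mem ((mem_cell_sub_iff ε i y).2 h), indicator_of_mem h]
  · rw [indicator_of_notMem (mt (mem_cell_sub_iff ε i y).1 h), indicator_of_notMem h]

lemma cellwise_sub (ε y : ℝ) :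
    cellwise m (fun j => x j - ε) (fun i z => f i (z + ε)) y = cellwise m x f (y + ε) := by
  simp only [cellwise, indicator_cell_sub]

lemma measurable_cellwise (hf : ∀ i, Measurable (f i)) : Measurable (cellwise m x f) :=
  Finset.measurable_fun_sum _ fun i _ => (hf i).indicator (isOpen_cell m x i).measurableSet

lemma norm_cellwise_le (y : ℝ) : ‖cellwise m x f y‖ ≤ ∑ i, ‖f i y‖ :=
  (norm_sum_le _ _).trans (Finset.sum_le_sum fun _ _ => norm_indicator_le_norm_self _ _)

lemma continuousAt_cellwise (hx : StrictMono x) (hf : ∀ i, Continuous (f i)) {y : ℝ}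
    (hy : y ∉ range x) : ContinuousAt (cellwise m x f) y := by
  obtain ⟨i, hi⟩ := exists_mem_cell hx hy
  have hev : f i =ᶠ[𝓝 y] cellwise m x f :=
    eventually_of_mem ((isOpen_cell m x i).mem_nhds hi) fun z hz => (cellwise_of_mem hz).symm
  exact ((hf i).continuousAt).congr hev

lemma cellwise_mul_eq_of_tsupport_subset {t : ℝ → ℂ} {i : Fin (m + 1)}
    (hsupp : tsupport t ⊆ cell m x i) (y : ℝ) : cellwise m x f y * t y = f i y * t y := by
  by_cases hy : y ∈ tsupport t
  · rw [cellwise_of_mem (hsupp hy)]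
  · simp [image_eq_zero_of_notMem_tsupport hy]

lemma sum_ofFun_indicator_cell (hf : ∀ i, Continuous (f i)) {t : ℝ → ℂ} (ht : Continuous t)
    (hts : HasCompactSupport t) :
    ∑ i, ofFun ((cell m x i).indicator (f i)) t = ∫ y, cellwise m x f y * t y := by
  simp only [ofFun, cellwise, Finset.sum_mul]
  rw [integral_finsetSum]
  intro i _
  simp only [← indicator_mul_left]
  exact (((hf i).mul ht).integrable_of_hasCompactSupport hts.mul_left).indicator
    (isOpen_cell m x i).measurableSet

end Piecewise

lemma IsTest.contDiff_mul {c t : ℝ → ℂ} (ht : IsTest t) (hc : ContDiff ℝ (⊤ : ℕ∞) c) :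
    IsTest (fun y => c y * t y) :=
  ⟨hc.mul ht.1, ht.2.mul_left⟩

lemma IsTest.comp_sub_const {t : ℝ → ℂ} (ht : IsTest t) (ε : ℝ) : IsTest (fun y => t (y - ε)) :=
  ⟨ht.1.comp (contDiff_id.sub contDiff_const), ht.2.comp_homeomorph (Homeomorph.subRight ε)⟩

section Delta

variable {t : ℝ → ℂ} {p : ℝ}

lemma deltaD_eq_zero_of_notMem_tsupport (j : ℕ) (hp : p ∉ tsupport t) : deltaD j p t = 0 := by
  have : iteratedFDeriv ℝ j t p = 0 := by
    by_contra h
    exact hp (support_iteratedFDeriv_subset j h)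
  simp [deltaD, iteratedDeriv_eq_iteratedFDeriv, this]

lemma mulSmooth_deltaD_eq_zero_of_notMem_tsupport (u : ℝ → ℂ) (j : ℕ) (hp : p ∉ tsupport t) :
    mulSmooth u (deltaD j p) t = 0 :=
  deltaD_eq_zero_of_notMem_tsupport j fun h => hp (tsupport_mul_subset_right h)

lemma mulSmooth_deltaD_congr_cell {m : ℕ} {x : Fin m → ℝ} {f : Fin (m + 1) → ℝ → ℂ}
    {i k : Fin (m + 1)} (hsupp : tsupport t ⊆ cell m x i) (hp : p ∈ cell m x k) (j : ℕ) :
    mulSmooth (f k) (deltaD j p) t = mulSmooth (f i) (deltaD j p) t := by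
  by_cases hpi : p ∈ cell m x i
  · rw [eq_of_mem_cell hpi hp]
  · have hp' : p ∉ tsupport t := fun h => hpi (hsupp h)
    rw [mulSmooth_deltaD_eq_zero_of_notMem_tsupport _ j hp',
      mulSmooth_deltaD_eq_zero_of_notMem_tsupport _ j hp']

lemma continuous_mulSmooth_comp_add_deltaD {u : ℝ → ℂ} (hu : ContDiff ℝ (⊤ : ℕ∞) u)
    (ht : ContDiff ℝ (⊤ : ℕ∞) t) (j : ℕ) (p : ℝ) :
    Continuous fun ε => mulSmooth (fun z => u (z + ε)) (deltaD j p) t := by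
  have leibniz : ∀ ε, iteratedDeriv j (fun z => u (z + ε) * t z) p = ∑ k ∈ Finset.range (j + 1),
      j.choose k * iteratedDeriv k u (p + ε) * iteratedDeriv (j - k) t p := fun ε => by
    have hu' : ContDiff ℝ (⊤ : ℕ∞) fun z => u (z + ε) := hu.comp (contDiff_id.add contDiff_const)
    rw [iteratedDeriv_fun_mul (hu'.contDiffAt.of_le (by exact_mod_cast le_top))
      (ht.contDiffAt.of_le (by exact_mod_cast le_top))]
    simp only [iteratedDeriv_comp_add_const]
  simp only [mulSmooth, deltaD, leibniz]
  have hcont : ∀ k : ℕ, Continuous (iteratedDeriv k u) := fun k =>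
    hu.continuous_iteratedDeriv k (by exact_mod_cast le_top)
  fun_prop

lemma continuous_mulSmooth_deltaD_sub {u : ℝ → ℂ} (hu : ContDiff ℝ (⊤ : ℕ∞) u)
    (ht : ContDiff ℝ (⊤ : ℕ∞) t) (j : ℕ) (p : ℝ) :
    Continuous fun ε => mulSmooth u (deltaD j (p - ε)) t :=
  continuous_const.mul (((hu.mul ht).continuous_iteratedDeriv j (by exact_mod_cast le_top)).comp
    (continuous_const.sub continuous_id))

end Delta

section RepDist

variable {m n : ℕ} {x : Fin m → ℝ} {f : Fin (m + 1) → ℝ → ℂ} {c : Fin m → Fin (n + 1) → ℂ}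
  {t : ℝ → ℂ}

lemma repDist_apply (hf : ∀ i, Continuous (f i)) (ht : IsTest t) :
    repDist m n x f c t = (∫ y, cellwise m x f y * t y) + ∑ i, ∑ j, c i j * deltaD j (x i) t := by
  rw [repDist, sum_ofFun_indicator_cell hf ht.1.continuous ht.2]

lemma repDist_eq_of_tsupport_subset_cell (hf : ∀ i, Continuous (f i)) (ht : IsTest t)
    {i : Fin (m + 1)} (hsupp : tsupport t ⊆ cell m x i) : repDist m n x f c t = ofFun (f i) t := by
  simp only [repDist_apply hf ht, cellwise_mul_eq_of_tsupport_subset hsupp, ofFun,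
    deltaD_eq_zero_of_notMem_tsupport _ fun h => apply_notMem_cell _ _ (hsupp h), mul_zero,
    Finset.sum_const_zero, add_zero]

lemma repDist_comp_sub_const (ε : ℝ) :
    repDist m n x f c (fun y => t (y - ε))
      = repDist m n (fun j => x j - ε) (fun i z => f i (z + ε)) c t := by
  simp only [repDist, ofFun, deltaD, iteratedDeriv_comp_sub_const]
  congr 1
  refine Finset.sum_congr rfl fun i _ => ?_
  rw [← integral_add_right_eq_self _ ε]
  simp only [indicator_cell_sub, add_sub_cancel_right]

lemma dEq_shift_repDist {G : SDist} (hG : dEq G (repDist m n x f c)) (ε : ℝ) :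
    dEq (shift ε G) (repDist m n (fun j => x j - ε) (fun i z => f i (z + ε)) c) :=
  fun _ ht => (hG _ (ht.comp_sub_const ε)).trans (repDist_comp_sub_const ε)

end RepDist

/-- The Hörmander product of `repDist m n x f Fc` and `repDist m n x' g Gc` when the singular
points interlace as `x' k < x k < x' (k+1)`. -/
def repProd (m n : ℕ) (x x' : Fin m → ℝ) (f g : Fin (m + 1) → ℝ → ℂ)
    (Fc Gc : Fin m → Fin (n + 1) → ℂ) : SDist := fun t =>
  (∫ y, cellwise m x f y * cellwise m x' g y * t y)
    + ∑ i : Fin m, ∑ j : Fin (n + 1),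
        (Fc i j * mulSmooth (g i.succ) (deltaD j (x i)) t
          + Gc i j * mulSmooth (f i.castSucc) (deltaD j (x' i)) t)

section RepProd

variable {m n : ℕ} {x x' : Fin m → ℝ} {f g : Fin (m + 1) → ℝ → ℂ}
  {Fc Gc : Fin m → Fin (n + 1) → ℂ} {t : ℝ → ℂ}

lemma repProd_eq_of_tsupport_subset_cell_left (hf : ∀ i, ContDiff ℝ (⊤ : ℕ∞) (f i))
    (hg : ∀ i, Continuous (g i)) (hx'x : ∀ k, x' k ∈ cell m x k.castSucc) (ht : IsTest t)
    {i : Fin (m + 1)} (hsupp : tsupport t ⊆ cell m x i) :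
    repProd m n x x' f g Fc Gc t = mulSmooth (f i) (repDist m n x' g Gc) t := by
  rw [mulSmooth, repDist_apply hg (ht.contDiff_mul (hf i)), repProd]
  congr 1
  · congr 1 with y
    rw [mul_right_comm, cellwise_mul_eq_of_tsupport_subset hsupp]
    ring
  · refine Finset.sum_congr rfl fun k _ => Finset.sum_congr rfl fun j _ => ?_
    rw [mulSmooth_deltaD_eq_zero_of_notMem_tsupport _ _ fun h => apply_notMem_cell _ _ (hsupp h),
      mulSmooth_deltaD_congr_cell hsupp (hx'x k), mul_zero, zero_add, mulSmooth]

lemma repProd_eq_of_tsupport_subset_cell_right (hf : ∀ i, Continuous (f i))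
    (hg : ∀ i, ContDiff ℝ (⊤ : ℕ∞) (g i)) (hxx' : ∀ k, x k ∈ cell m x' k.succ) (ht : IsTest t)
    {i : Fin (m + 1)} (hsupp : tsupport t ⊆ cell m x' i) :
    repProd m n x x' f g Fc Gc t = mulSmooth (g i) (repDist m n x f Fc) t := by
  rw [mulSmooth, repDist_apply hf (ht.contDiff_mul (hg i)), repProd]
  congr 1
  · congr 1 with y
    rw [mul_assoc, cellwise_mul_eq_of_tsupport_subset hsupp]
  · refine Finset.sum_congr rfl fun k _ => Finset.sum_congr rfl fun j _ => ?_
    rw [mulSmooth_deltaD_eq_zero_of_notMem_tsupport _ _ fun h => apply_notMem_cell _ _ (hsupp h),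
      mulSmooth_deltaD_congr_cell hsupp (hxx' k), mul_zero, add_zero, mulSmooth]

/-- Near a point `x k` the second factor is smooth, elsewhere the first one is. -/
lemma isHProd_repProd (hx : StrictMono x) (hf : ∀ i, ContDiff ℝ (⊤ : ℕ∞) (f i))
    (hg : ∀ i, ContDiff ℝ (⊤ : ℕ∞) (g i)) {F G : SDist} (hF : dEq F (repDist m n x f Fc))
    (hG : dEq G (repDist m n x' g Gc)) (hxx' : ∀ k, x k ∈ cell m x' k.succ)
    (hx'x : ∀ k, x' k ∈ cell m x k.castSucc) :
    IsHProd F G (repProd m n x x' f g Fc Gc) := by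
  have hfc i := (hf i).continuous
  have hgc i := (hg i).continuous
  intro z
  by_cases hz : z ∈ range x
  · obtain ⟨k, rfl⟩ := hz
    refine ⟨_, isOpen_cell m x' k.succ, hxx' k, Or.inr ⟨g k.succ, hg _, fun t ht hs => ?_,
      fun t ht hs => ?_⟩⟩
    · rw [hG t ht, repDist_eq_of_tsupport_subset_cell hgc ht hs]
    · rw [repProd_eq_of_tsupport_subset_cell_right hfc hg hxx' ht hs, mulSmooth, mulSmooth,
        hF _ (ht.contDiff_mul (hg _))]
  · obtain ⟨i, hi⟩ := exists_mem_cell hx hz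
    refine ⟨_, isOpen_cell m x i, hi, Or.inl ⟨f i, hf i, fun t ht hs => ?_, fun t ht hs => ?_⟩⟩
    · rw [hF t ht, repDist_eq_of_tsupport_subset_cell hfc ht hs]
    · rw [repProd_eq_of_tsupport_subset_cell_left hf hgc hx'x ht hs, mulSmooth, mulSmooth,
        hG _ (ht.contDiff_mul (hf _))]

end RepProd

/-- Dominated convergence: `v (· + ε)` is bounded on `tsupport t` for `|ε| ≤ 1` and converges
to `v` wherever `v` is continuous. -/
lemma tendsto_integral_mul_comp_add {u v t : ℝ → ℂ} {U V : ℝ → ℝ}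
    (hu : Measurable u) (hv : Measurable v) (hU : Continuous U) (hV : Continuous V)
    (huU : ∀ y, ‖u y‖ ≤ U y) (hvV : ∀ y, ‖v y‖ ≤ V y) (hvc : ∀ᵐ y, ContinuousAt v y)
    (ht : Continuous t) (hts : HasCompactSupport t) :
    Tendsto (fun ε => ∫ y, u y * v (y + ε) * t y) (𝓝 0) (𝓝 (∫ y, u y * v y * t y)) := by
  have hK : IsCompact ((fun p : ℝ × ℝ => p.1 + p.2) '' (tsupport t ×ˢ Icc (-1) 1)) :=
    (hts.isCompact.prod isCompact_Icc).image continuous_add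
  obtain ⟨C, hC⟩ := hK.exists_bound_of_continuousOn hV.continuousOn
  refine tendsto_integral_filter_of_dominated_convergence (fun y => U y * C * ‖t y‖)
    (Eventually.of_forall fun ε => ?_) ?_ ?_ ?_
  · exact ((hu.mul (hv.comp (measurable_add_const ε))).mul ht.measurable).aestronglyMeasurable
  · filter_upwards [Icc_mem_nhds neg_one_lt_zero one_pos] with ε hε
    refine ae_of_all _ fun y => ?_
    by_cases hy : y ∈ tsupport t
    · have hvC : ‖v (y + ε)‖ ≤ C :=
        (hvV _).trans ((Real.le_norm_self _).trans (hC _ ⟨(y, ε), ⟨hy, hε⟩, rfl⟩))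
      rw [norm_mul, norm_mul]
      exact mul_le_mul_of_nonneg_right
        (mul_le_mul (huU y) hvC (norm_nonneg _) ((norm_nonneg _).trans (huU y))) (norm_nonneg _)
    · simp [image_eq_zero_of_notMem_tsupport hy]
  · exact ((hU.mul continuous_const).mul ht.norm).integrable_of_hasCompactSupport
      hts.norm.mul_left
  · filter_upwards [hvc] with y hy
    have hshift : Tendsto (fun ε : ℝ => y + ε) (𝓝 0) (𝓝 y) :=
      (continuous_const.add continuous_id).tendsto' 0 y (add_zero y)
    exact ((hy.tendsto.comp hshift).const_mul _).mul_const _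

section Limit

variable {m n : ℕ} {x : Fin m → ℝ} {f g : Fin (m + 1) → ℝ → ℂ}
  {Fc Gc : Fin m → Fin (n + 1) → ℂ} {t : ℝ → ℂ}

lemma tendsto_repProd_shift (hx : StrictMono x) (hf : ∀ i, ContDiff ℝ (⊤ : ℕ∞) (f i))
    (hg : ∀ i, ContDiff ℝ (⊤ : ℕ∞) (g i)) (ht : IsTest t) :
    Tendsto (fun ε => repProd m n x (fun j => x j - ε) f (fun i z => g i (z + ε)) Fc Gc t)
      (𝓝 0) (𝓝 (repProd m n x x f g Fc Gc t)) := by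
  have hfc i := (hf i).continuous
  have hgc i := (hg i).continuous
  have hae : ∀ᵐ y, ContinuousAt (cellwise m x g) y := by
    filter_upwards [measure_eq_zero_iff_ae_notMem.1 ((finite_range x).measure_zero volume)]
      with y hy using continuousAt_cellwise hx hgc hy
  simp only [repProd, cellwise_sub]
  refine (tendsto_integral_mul_comp_add (measurable_cellwise fun i => (hfc i).measurable)
    (measurable_cellwise fun i => (hgc i).measurable) (by fun_prop) (by fun_prop) norm_cellwise_le
    norm_cellwise_le hae ht.1.continuous ht.2).add
    (tendsto_finsetSum _ fun i _ => tendsto_finsetSum _ fun j _ => ?_)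
  exact (((continuous_mulSmooth_comp_add_deltaD (hg _) ht.1 j (x i)).tendsto' 0 _
    (by simp)).const_mul _).add
    (((continuous_mulSmooth_deltaD_sub (hf _) ht.1 j (x i)).tendsto' 0 _ (by simp)).const_mul _)

end Limit

/-- Explicit formula for the product F*G of two elements of 𝒜. -/
theorem star_explicit_formula (m n : ℕ) (x : Fin m → ℝ) (hx : StrictMono x)
    (f g : Fin (m + 1) → ℝ → ℂ)
    (hf : ∀ i, ContDiff ℝ (⊤ : ℕ∞) (f i)) (hg : ∀ i, ContDiff ℝ (⊤ : ℕ∞) (g i))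
    (Fc Gc : Fin m → Fin (n + 1) → ℂ) (F G : SDist)
    (hF : dEq F (repDist m n x f Fc)) (hG : dEq G (repDist m n x g Gc)) :
    IsStar F G (fun t =>
      (∑ i : Fin (m + 1), ofFun ((cell m x i).indicator (fun y => f i y * g i y)) t)
      + ∑ i : Fin m, ∑ j : Fin (n + 1),
          (Fc i j * mulSmooth (g i.succ) (deltaD (j : ℕ) (x i)) t
            + Gc i j * mulSmooth (f i.castSucc) (deltaD (j : ℕ) (x i)) t)) := by
  refine ⟨fun ε => repProd m n x (fun j => x j - ε) f (fun i z => g i (z + ε)) Fc Gc,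
    ?_, fun t ht => ?_⟩
  · filter_upwards [eventually_interlaced hx] with ε ⟨hxx', hx'x⟩
    exact isHProd_repProd hx hf (fun i => (hg i).comp (contDiff_id.add contDiff_const)) hF
      (dEq_shift_repDist hG ε) hxx' hx'x
  · convert (tendsto_repProd_shift hx hf hg ht).mono_left nhdsWithin_le_nhds using 3
    simp only [repProd, ← cellwise_mul]
    rw [sum_ofFun_indicator_cell (f := fun i y => f i y * g i y)
      (fun i => (hf i).continuous.mul (hg i).continuous) ht.1.continuous ht.2]
end
end
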